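/- Let 0 ≤ m ≤ k ≤ n. Then there exists a collection of 2^{(k−m)²} · [n−k choose k−m]₂ · [k choose m]₂ mutually orthogonal permutations of Gr₂(n,k), each of which has the m-intersection property. -/

import Mathlib

/-- The Gaussian binomial coefficient `[n choose k]₂`, as a natural number:
`∏_{i=0}^{k-1}(2^{n-i}-1) / ∏_{i=0}^{k-1}(2^{k-i}-1)` (the division is exact). -/
def gbinomN (n k : ℕ) : ℕ :=
  (∏ i ∈ Finset.range k, (2 ^ (n - i) - 1)) / (∏ i ∈ Finset.range k, (2 ^ (k - i) - 1))

/-- The Grassmannian `Gr₂(n,k)`: the set of `k`-dimensional subspaces of `𝔽₂ⁿ`. -/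
abbrev Grassmannian (n k : ℕ) :=
  {W : Submodule (ZMod 2) (Fin n → ZMod 2) // Module.finrank (ZMod 2) W = k}

/-!
The relation `dim (A ⊓ B) = m` on `Gr₂(n,k)` is symmetric, and every `A` is related to exactly
`N = 2^{(k-m)²}·[n-k choose k-m]₂·[k choose m]₂` subspaces `B`: the intersection `M = A ⊓ B`
is one of the `[k choose m]₂` subspaces of `A` of dimension `m`, and `B/M` is a
`(k-m)`-dimensional subspace of `V/M` meeting `A/M` trivially. Such subspaces are the graphs of
linear maps from a `(k-m)`-dimensional subspace of `(V/M)/(A/M) ≅ V/A` to `A/M`, so there are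
`[n-k choose k-m]₂ · 2^{(k-m)²}` of them. A relation on a finite set in which every element has
exactly `N` successors and `N` predecessors is the union of `N` pointwise distinct permutations:
by Hall's theorem it contains a permutation, and removing it leaves a relation of the same kind
with `N - 1` in place of `N`.
-/

open Finset

theorem Nat.card_subtype_eq_mul_of_card_fiber {α β : Type*} [Finite α] [Finite β]
    {P : α → Prop} {Q : β → Prop} (f : α → β) (hf : ∀ a, P a → Q (f a)) {c : ℕ}
    (hc : ∀ b, Q b → Nat.card {a // P a ∧ f a = b} = c) :
    Nat.card {a // P a} = Nat.card {b // Q b} * c := by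
  classical
  let g : {a // P a} → {b // Q b} := fun a => ⟨f a, hf a a.2⟩
  have hfiber (b : {b // Q b}) : Nat.card {a // g a = b} = c := by
    rw [← hc b b.2]
    exact Nat.card_congr ((Equiv.subtypeEquivRight fun a => Subtype.ext_iff).trans
      (Equiv.subtypeSubtypeEquivSubtypeInter P (f · = b)))
  have := Fintype.ofFinite {b // Q b}
  rw [Nat.card_congr (Equiv.sigmaFiberEquiv g).symm, Nat.card_sigma,
    sum_congr rfl fun b _ => hfiber b, sum_const, Finset.card_univ, smul_eq_mul,
    Nat.card_eq_fintype_card]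

section Biregular

variable {S : Type*} [Fintype S] (R : S → S → Prop) [DecidableRel R]

theorem exists_perm_forall_rel_of_biregular {d : ℕ} (hd : 0 < d)
    (hout : ∀ a, #{b | R a b} = d) (hin : ∀ b, #{a | R a b} = d) :
    ∃ σ : Equiv.Perm S, ∀ a, R a (σ a) := by
  classical
  have hall (s : Finset S) : #s ≤ #(s.biUnion fun a => {b | R a b}) := by
    refine Nat.le_of_mul_le_mul_right (card_mul_le_card_mul R (fun a ha => ?_) fun b _ => ?_) hd
    · refine (hout a).symm.le.trans (card_le_card fun b hb => ?_)
      simp only [mem_filter, mem_univ, true_and] at hb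
      simpa [bipartiteAbove, hb] using ⟨a, ha, hb⟩
    · exact (hin b).symm ▸ card_le_card (filter_subset_filter _ (subset_univ s))
  obtain ⟨f, hf_inj, hf⟩ := (all_card_le_biUnion_card_iff_exists_injective _).mp hall
  exact ⟨Equiv.ofBijective f (Finite.injective_iff_bijective.mp hf_inj),
    fun a => by simpa using hf a⟩

theorem exists_pairwise_ne_perms_of_biregular (N : ℕ)
    (hout : ∀ a, #{b | R a b} = N) (hin : ∀ b, #{a | R a b} = N) :
    ∃ π : Fin N → Equiv.Perm S,
      (∀ i j, i ≠ j → ∀ a, π i a ≠ π j a) ∧ ∀ i a, R a (π i a) := by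
  classical
  induction N generalizing R with
  | zero => exact ⟨finZeroElim, fun i => i.elim0, fun i => i.elim0⟩
  | succ N ih =>
    obtain ⟨σ, hσ⟩ := exists_perm_forall_rel_of_biregular R N.succ_pos hout hin
    obtain ⟨π, hπ_ne, hπ⟩ := ih (fun a b => R a b ∧ b ≠ σ a)
      (fun a => by
        rw [← Nat.add_right_cancel_iff, ← hout a,
          ← card_erase_add_one ((mem_filter_univ _).2 (hσ a))]
        congr 2; ext b; simp [and_comm])
      (fun b => by
        have hb : R (σ.symm b) b := by simpa using hσ (σ.symm b)
        rw [← Nat.add_right_cancel_iff, ← hin b,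
          ← card_erase_add_one (s := {a | R a b}) (by simpa using hb)]
        congr 2; ext a; simp [and_comm, Equiv.eq_symm_apply, eq_comm])
    refine ⟨Fin.cons σ π, fun i j hij a => ?_, fun i a => ?_⟩
    · cases i using Fin.cases <;> cases j using Fin.cases
      all_goals simp only [Fin.cons_zero, Fin.cons_succ]
      · exact absurd rfl hij
      · exact fun h => (hπ _ a).2 h.symm
      · exact (hπ _ a).2
      · exact hπ_ne _ _ (fun h => hij (by rw [h])) a
    · cases i using Fin.cases
      · simpa using hσ a
      · simpa using (hπ _ a).1

end Biregular

section Lifts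

variable {R V V' : Type*} [Ring R] [AddCommGroup V] [Module R V] [AddCommGroup V'] [Module R V']
  (p : V →ₗ[R] V') (T' : Submodule R V')

noncomputable def sectionsEquivLifts :
    {s : T' →ₗ[R] V // p ∘ₗ s = T'.subtype} ≃
      {T : Submodule R V // T ⊓ LinearMap.ker p = ⊥ ∧ T.map p = T'} := by
  have hps (s : {s : T' →ₗ[R] V // p ∘ₗ s = T'.subtype}) (x : T') : p (s.1 x) = x :=
    LinearMap.congr_fun s.2 x
  refine Equiv.ofBijective (fun s => ⟨LinearMap.range s.1, ?_, ?_⟩) ⟨fun s s' h => ?_, ?_⟩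
  · rw [eq_bot_iff]
    rintro _ ⟨⟨x, rfl⟩, hx⟩
    rw [SetLike.mem_coe, LinearMap.mem_ker, hps, ZeroMemClass.coe_eq_zero] at hx
    simp [hx]
  · rw [← LinearMap.range_comp, s.2, Submodule.range_subtype]
  · refine Subtype.ext (LinearMap.ext fun x => ?_)
    have h' : LinearMap.range s.1 = LinearMap.range s'.1 := congrArg Subtype.val h
    obtain ⟨y, hy⟩ : s.1 x ∈ LinearMap.range s'.1 := h' ▸ LinearMap.mem_range_self _ x
    obtain rfl : y = x := Subtype.ext (by rw [← hps s' y, hy, hps s x])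
    exact hy.symm
  · rintro ⟨T, hT_ker, hT_map⟩
    have hinj : Function.Injective (p ∘ₗ T.subtype) := by
      rw [← LinearMap.ker_eq_bot, LinearMap.ker_comp, ← Submodule.disjoint_iff_comap_eq_bot,
        disjoint_iff, hT_ker]
    let e := (LinearEquiv.ofInjective _ hinj).trans (LinearEquiv.ofEq _ _
      (by rw [LinearMap.range_comp, Submodule.range_subtype, hT_map]))
    refine ⟨⟨T.subtype ∘ₗ e.symm.toLinearMap, LinearMap.ext fun x => ?_⟩, ?_⟩
    · exact congrArg Subtype.val (e.apply_symm_apply x)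
    · refine Subtype.ext (show LinearMap.range (T.subtype ∘ₗ e.symm.toLinearMap) = T from ?_)
      rw [LinearMap.range_comp, LinearEquiv.range, Submodule.map_top, Submodule.range_subtype]

noncomputable def sectionsEquivLinearMapKer (σ : V' →ₗ[R] V)
    (hσ : p ∘ₗ σ = LinearMap.id) :
    {s : T' →ₗ[R] V // p ∘ₗ s = T'.subtype} ≃ (T' →ₗ[R] LinearMap.ker p) where
  toFun s := (s.1 - σ ∘ₗ T'.subtype).codRestrict _ fun x => by
    have hs : p (s.1 x) = x := LinearMap.congr_fun s.2 x
    have hσx : p (σ x) = x := LinearMap.congr_fun hσ x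
    simp [hs, hσx]
  invFun φ := ⟨σ ∘ₗ T'.subtype + (LinearMap.ker p).subtype ∘ₗ φ, by
    ext x
    have hσx : p (σ x) = x := LinearMap.congr_fun hσ x
    simp [hσx]⟩
  left_inv s := Subtype.ext <| LinearMap.ext fun x => add_sub_cancel (σ x) (s.1 x)
  right_inv φ := by ext x; simp

theorem Submodule.comap_subtype_eq_iff {W W' : Submodule R V} (M' : Submodule R W) :
    W'.comap W.subtype = M' ↔ W ⊓ W' = M'.map W.subtype := by
  rw [← Submodule.map_comap_subtype,
    (Submodule.map_injective_of_injective W.injective_subtype).eq_iff]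

theorem Submodule.inf_comap_mkQ_eq_iff {M W : Submodule R V} (hMW : M ≤ W)
    (T : Submodule R (V ⧸ M)) : W ⊓ T.comap M.mkQ = M ↔ T ⊓ W.map M.mkQ = ⊥ := by
  rw [← (Submodule.comap_injective_of_surjective M.mkQ_surjective).eq_iff, Submodule.comap_inf,
    Submodule.comap_map_mkQ, Submodule.comap_bot, Submodule.ker_mkQ, sup_eq_right.2 hMW, inf_comm]

end Lifts

section FiniteDimensional

open Module

variable {K V V' : Type*} [Field K] [AddCommGroup V] [Module K V] [FiniteDimensional K V]
  [AddCommGroup V'] [Module K V']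

theorem Submodule.finrank_map_add_finrank_inf_ker (f : V →ₗ[K] V')
    (T : Submodule K V) :
    finrank K (T.map f) + finrank K ↥(T ⊓ LinearMap.ker f) = finrank K T := by
  have h := LinearMap.finrank_range_add_finrank_ker (f ∘ₗ T.subtype)
  rwa [LinearMap.range_comp, Submodule.range_subtype, LinearMap.ker_comp,
    ← Submodule.finrank_map_subtype_eq, Submodule.map_comap_subtype] at h

theorem Submodule.finrank_map_mkQ_add_finrank {M T : Submodule K V}
    (hMT : M ≤ T) : finrank K (T.map M.mkQ) + finrank K M = finrank K T := by
  have h := Submodule.finrank_map_add_finrank_inf_ker M.mkQ T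
  rwa [M.ker_mkQ, inf_eq_right.2 hMT] at h

theorem card_finrank_inf_eq_eq_card_quotient {M W : Submodule K V} (hMW : M ≤ W) {l : ℕ}
    (hl : finrank K M ≤ l) :
    Nat.card {W' : Submodule K V // finrank K W' = l ∧ W ⊓ W' = M} =
      Nat.card {T : Submodule K (V ⧸ M) //
        finrank K T = l - finrank K M ∧ T ⊓ W.map M.mkQ = ⊥} := by
  have hle {W' : Submodule K V} (h : W ⊓ W' = M) : M ≤ W' := h ▸ inf_le_right
  refine Nat.card_congr
    { toFun W' := ⟨W'.1.map M.mkQ, ?_, (Submodule.inf_comap_mkQ_eq_iff hMW _).1 ?_⟩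
      invFun T := ⟨T.1.comap M.mkQ, ?_, (Submodule.inf_comap_mkQ_eq_iff hMW _).2 T.2.2⟩
      left_inv W' := ?_
      right_inv T := Subtype.ext (Submodule.map_comap_eq_of_surjective M.mkQ_surjective _) }
  · have := Submodule.finrank_map_mkQ_add_finrank (hle W'.2.2)
    omega
  · rw [Submodule.comap_map_mkQ, sup_eq_right.2 (hle W'.2.2), W'.2.2]
  · have := Submodule.finrank_map_mkQ_add_finrank (Submodule.le_comap_mkQ M T.1)
    rw [Submodule.map_comap_eq_of_surjective M.mkQ_surjective] at this
    omega
  · exact Subtype.ext <| by simp only [Submodule.comap_map_mkQ, sup_eq_right.2 (hle W'.2.2)]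

end FiniteDimensional

def gaussBinom (q n k : ℕ) : ℕ :=
  (∏ i ∈ range k, (q ^ (n - i) - 1)) / ∏ i ∈ range k, (q ^ (k - i) - 1)

theorem gbinomN_eq_gaussBinom_two (n k : ℕ) : gbinomN n k = gaussBinom 2 n k := rfl

theorem prod_pow_sub_pow_eq (q : ℕ) {j a : ℕ} (hja : j ≤ a) :
    ∏ i : Fin j, (q ^ a - q ^ (i : ℕ)) =
      q ^ (∑ i ∈ range j, i) * ∏ i ∈ range j, (q ^ (a - i) - 1) := by
  rw [Fin.prod_univ_eq_prod_range (fun i => q ^ a - q ^ i), ← prod_pow_eq_pow_sum,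
    ← prod_mul_distrib]
  refine prod_congr rfl fun i hi => ?_
  rw [Nat.mul_sub, mul_one, ← pow_add, Nat.add_sub_cancel' ((mem_range.1 hi).le.trans hja)]

section FiniteField

open Module

variable {K V : Type*} [Field K] [Fintype K] [AddCommGroup V] [Module K V] [Finite V]

local notation "q" => Fintype.card K

theorem card_finrank_eq_mul_prod {j : ℕ} (hj : j ≤ finrank K V) :
    Nat.card {W : Submodule K V // finrank K W = j} * ∏ i : Fin j, (q ^ j - q ^ (i : ℕ)) =
      ∏ i : Fin j, (q ^ finrank K V - q ^ (i : ℕ)) := by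
  rw [← card_linearIndependent hj]
  refine (Nat.card_subtype_eq_mul_of_card_fiber (fun s => Submodule.span K (Set.range s))
    (fun s hs => by rw [finrank_span_eq_card hs, Fintype.card_fin]) fun W hW => ?_).symm
  rw [← hW, ← card_linearIndependent le_rfl, hW]
  refine Nat.card_congr
    { toFun s := ⟨fun i => ⟨s.1 i, s.2.2.le (Submodule.subset_span ⟨i, rfl⟩)⟩,
        .of_comp W.subtype s.2.1⟩
      invFun t := ⟨W.subtype ∘ t.1, t.2.map' _ W.ker_subtype, ?_⟩
      left_inv s := rfl
      right_inv t := rfl }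
  rw [Set.range_comp, ← Submodule.map_span,
    t.2.span_eq_top_of_card_eq_finrank' (by rw [Fintype.card_fin, hW]), Submodule.map_top,
    Submodule.range_subtype]

theorem card_finrank_eq_gaussBinom (j : ℕ) :
    Nat.card {W : Submodule K V // finrank K W = j} = gaussBinom q (finrank K V) j := by
  have hq : 1 < q := Fintype.one_lt_card
  rcases le_or_gt j (finrank K V) with hj | hj
  · have h := card_finrank_eq_mul_prod hj
    rw [prod_pow_sub_pow_eq q le_rfl, prod_pow_sub_pow_eq q hj, mul_left_comm,
      Nat.mul_right_inj (by positivity)] at h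
    refine (Nat.div_eq_of_eq_mul_left (prod_pos fun i hi => ?_) h.symm).symm
    exact Nat.sub_pos_of_lt (Nat.one_lt_pow (Nat.sub_ne_zero_of_lt (mem_range.1 hi)) hq)
  · have : IsEmpty {W : Submodule K V // finrank K W = j} :=
      ⟨fun W => (W.1.finrank_le.trans_lt (by rwa [W.2])).false⟩
    rw [Nat.card_of_isEmpty, gaussBinom, prod_eq_zero (mem_range.2 hj) (by simp), Nat.zero_div]

theorem card_finrank_inf_eq_bot (U : Submodule K V) (j : ℕ) :
    Nat.card {T : Submodule K V // finrank K T = j ∧ T ⊓ U = ⊥} =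
      gaussBinom q (finrank K V - finrank K U) j * q ^ (j * finrank K U) := by
  have : Finite (V ⧸ U) := Module.finite_of_finite K
  obtain ⟨σ, hσ⟩ := U.mkQ.exists_rightInverse_of_surjective U.range_mkQ
  have hfinrank_map {T : Submodule K V} (hT : T ⊓ U = ⊥) :
      finrank K (T.map U.mkQ) = finrank K T := by
    have h := Submodule.finrank_map_add_finrank_inf_ker U.mkQ T
    rwa [U.ker_mkQ, hT, finrank_bot, add_zero] at h
  rw [Nat.card_subtype_eq_mul_of_card_fiber
    (Q := fun T' : Submodule K (V ⧸ U) => finrank K T' = j) (·.map U.mkQ)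
    (fun T hT => (hfinrank_map hT.2).trans hT.1) fun T' hT' => ?_, card_finrank_eq_gaussBinom,
    Submodule.finrank_quotient]
  have hfiber (T : Submodule K V) : ((finrank K T = j ∧ T ⊓ U = ⊥) ∧ T.map U.mkQ = T') ↔
      T ⊓ LinearMap.ker U.mkQ = ⊥ ∧ T.map U.mkQ = T' := by
    rw [U.ker_mkQ]
    constructor
    · rintro ⟨⟨-, hT⟩, hT_map⟩
      exact ⟨hT, hT_map⟩
    · rintro ⟨hT, rfl⟩
      exact ⟨⟨(hfinrank_map hT).symm.trans hT', hT⟩, rfl⟩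
  rw [Nat.card_congr ((Equiv.subtypeEquivRight hfiber).trans
      ((sectionsEquivLifts U.mkQ T').symm.trans (sectionsEquivLinearMapKer U.mkQ T' σ hσ))),
    Module.natCard_eq_pow_finrank (K := K), finrank_linearMap, U.ker_mkQ, hT',
    Nat.card_eq_fintype_card]

theorem card_finrank_finrank_inf_eq (W : Submodule K V) {l m : ℕ} (hml : m ≤ l) :
    Nat.card {W' : Submodule K V // finrank K W' = l ∧ finrank K ↥(W ⊓ W') = m} =
      gaussBinom q (finrank K W) m *
        (gaussBinom q (finrank K V - finrank K W) (l - m) * q ^ ((l - m) * (finrank K W - m))) := by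
  rw [Nat.card_subtype_eq_mul_of_card_fiber (Q := fun M' : Submodule K W => finrank K M' = m)
    (·.comap W.subtype) (fun W' hW' => by
      rw [← Submodule.finrank_map_subtype_eq, Submodule.map_comap_subtype, hW'.2])
    fun M' hM' => ?_, card_finrank_eq_gaussBinom]
  set M := M'.map W.subtype
  have : Finite (V ⧸ M) := Module.finite_of_finite K
  have hMW : M ≤ W := Submodule.map_subtype_le W M'
  have hM : finrank K M = m := (Submodule.finrank_map_subtype_eq W M').trans hM'
  have hfiber (W' : Submodule K V) :
      ((finrank K W' = l ∧ finrank K ↥(W ⊓ W') = m) ∧ W'.comap W.subtype = M') ↔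
        finrank K W' = l ∧ W ⊓ W' = M := by
    rw [Submodule.comap_subtype_eq_iff]
    constructor
    · rintro ⟨⟨hW', -⟩, hM'⟩
      exact ⟨hW', hM'⟩
    · rintro ⟨hW', hM'⟩
      exact ⟨⟨hW', hM' ▸ hM⟩, hM'⟩
  have hWM := Submodule.finrank_map_mkQ_add_finrank hMW
  have hW_le := W.finrank_le
  rw [Nat.card_congr (Equiv.subtypeEquivRight hfiber),
    card_finrank_inf_eq_eq_card_quotient hMW (hM ▸ hml), card_finrank_inf_eq_bot,
    Submodule.finrank_quotient, hM,
    show finrank K (W.map M.mkQ) = finrank K W - m by omega,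
    show finrank K V - m - (finrank K W - m) = finrank K V - finrank K W by omega]

end FiniteField

theorem exists_mutually_orthogonal_permutations_with_intersection_property
    {n k m : ℕ} (hmk : m ≤ k) :
    ∃ π : Fin (2 ^ ((k - m) ^ 2) * gbinomN (n - k) (k - m) * gbinomN k m) →
        Equiv.Perm (Grassmannian n k),
      (∀ i j, i ≠ j → ∀ W, π i W ≠ π j W) ∧
      (∀ i, ∀ W : Grassmannian n k,
        Module.finrank (ZMod 2) ↥((W : Submodule (ZMod 2) (Fin n → ZMod 2)) ⊓
          ((π i W : Grassmannian n k) : Submodule (ZMod 2) (Fin n → ZMod 2))) = m) := by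
  classical
  have := Fintype.ofFinite (Grassmannian n k)
  have hdeg (A : Grassmannian n k) :
      #{B : Grassmannian n k | Module.finrank (ZMod 2) ↥(A.1 ⊓ B.1) = m} =
        2 ^ ((k - m) ^ 2) * gbinomN (n - k) (k - m) * gbinomN k m := by
    rw [← Fintype.card_subtype, ← Nat.card_eq_fintype_card,
      Nat.card_congr (Equiv.subtypeSubtypeEquivSubtypeInter
        (fun W : Submodule (ZMod 2) (Fin n → ZMod 2) => Module.finrank (ZMod 2) W = k)
        (fun W => Module.finrank (ZMod 2) ↥(A.1 ⊓ W) = m)), card_finrank_finrank_inf_eq A.1 hmk,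
      ZMod.card, A.2, Module.finrank_fin_fun, sq]
    simp only [gbinomN_eq_gaussBinom_two]
    ring
  obtain ⟨π, hπ_ne, hπ⟩ := exists_pairwise_ne_perms_of_biregular
    (fun A B : Grassmannian n k => Module.finrank (ZMod 2) ↥(A.1 ⊓ B.1) = m) _ hdeg
    fun B => (congrArg card (filter_congr fun A _ => by rw [inf_comm])).trans (hdeg B)
  exact ⟨π, hπ_ne, hπ⟩
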